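/- Fix B > 0 and let R = Q∘K be an RNN with output dimension 1 and hidden state size m. Then there exists an RNN R' with the same input dimension, output dimension 1, and hidden state size m + 11 such that for all x ∈ ℝ^{d_in}, all integers k >= 2, and all l ∈ {0,...,2^k - 1}: (R' D x)[2^k - 1 + l] = C((R D x)[2^k - 2], -B, B), where C(y, A, B) denotes the clipping operator equal to A if y <= A, to B if y >= B, and to y otherwise. -/

import Mathlib

/-- ReLU applied componentwise. -/
noncomputable def relu {n : Type*} (v : n → ℝ) : n → ℝ := fun i => max 0 (v i)

/-- An RNN with input index type `ι`, hidden state index type `κ`, output index type `ω`,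
parametrized by weights `A_h, A_x, A_o, b_h, b_o`. -/
structure RNN (ι κ ω : Type) where
  Ah : Matrix κ κ ℝ
  Ax : Matrix κ ι ℝ
  Ao : Matrix ω κ ℝ
  bh : κ → ℝ
  bo : ω → ℝ

/-- Hidden state sequence `(K 𝒟 x)[t]` for the input sequence `(𝒟 x)[t] = x·1{t=0}`,
with the convention `h[-1] = 0`:  `h[0] = ρ(A_x x + b_h)`, `h[t+1] = ρ(A_h h[t] + b_h)`. -/
noncomputable def RNN.hid {ι κ ω : Type} [Fintype ι] [Fintype κ] (R : RNN ι κ ω)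
    (x : ι → ℝ) : ℕ → κ → ℝ
  | 0 => relu (R.Ax.mulVec x + R.bh)
  | t + 1 => relu (R.Ah.mulVec (RNN.hid R x t) + R.bh)

/-- Output sequence `(R 𝒟 x)[t] = A_o h[t] + b_o`. -/
noncomputable def RNN.out {ι κ ω : Type} [Fintype ι] [Fintype κ] (R : RNN ι κ ω)
    (x : ι → ℝ) (t : ℕ) : ω → ℝ :=
  R.Ao.mulVec (R.hid x t) + R.bo

/-- The clipping operator `C(y, A, B)`: equals `A` if `y ≤ A`, `B` if `y ≥ B`,
and `y` otherwise. -/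
noncomputable def clip (y A B : ℝ) : ℝ := if y ≤ A then A else if B ≤ y then B else y

/-!
The new network runs `R` unchanged and adds a block of eleven neurons reading its output.

A timer detects the sampling times `t = 2^k - 2`. A clock neuron carries `2^{-t}`; a neuron `u`
doubles at every step, so once seeded with `2^{-(2^k - 4)}` at time `2^k + 1` it reaches `1` at
time `2^{k+1} - 3` and `2` at time `2^{k+1} - 2`. Two threshold neurons `s = ρ(2u - 1)` and
`s₂ = ρ(2u - 2)` then fire, and `s - 3/2 s₂` is a pulse equal to `1` exactly at the times
`2^k - 2` (`k ≥ 2`) and `0` otherwise; `s` resets `u` to `0`, and `s₂` gates the clock into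
the neuron `z` that re-seeds `u` for the next window.

At a pulse, `ρ(y + B) - ρ(y - B) = C(y, -B, B) + B` is sampled into the difference `v₁ - v₂` of two
neurons while a register `G` is emptied; the step after, `G` takes over the sample and keeps it.
Since `v₁ - v₂ + G` stays in `[0, 2B]`, the emptying is exact, so `v₁ - v₂ + G - B` is the clipped
sample throughout the window `[2^k - 1, 2^{k+1} - 2]`.
-/

open Matrix

noncomputable section

namespace RNN

variable {ι κ κ' ω ω' : Type} [Fintype ι] [Fintype κ] [Fintype κ']

@[simps]
def reindexHidden (e : κ ≃ κ') (R : RNN ι κ ω) : RNN ι κ' ω where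
  Ah := R.Ah.submatrix e.symm e.symm
  Ax := R.Ax.submatrix e.symm id
  Ao := R.Ao.submatrix id e.symm
  bh := R.bh ∘ e.symm
  bo := R.bo

theorem hid_reindexHidden (e : κ ≃ κ') (R : RNN ι κ ω) (x : ι → ℝ) (t : ℕ) :
    (R.reindexHidden e).hid x t = R.hid x t ∘ e.symm := by
  induction t with
  | zero => rfl
  | succ t ih =>
    simp only [hid, ih, reindexHidden_Ah, submatrix_mulVec_equiv, Equiv.symm_symm,
      Function.comp_assoc, Equiv.symm_comp_self, Function.comp_id]
    rfl

theorem out_reindexHidden (e : κ ≃ κ') (R : RNN ι κ ω) (x : ι → ℝ) (t : ℕ) :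
    (R.reindexHidden e).out x t = R.out x t := by
  simp only [out, hid_reindexHidden, reindexHidden_Ao, submatrix_mulVec_equiv, Equiv.symm_symm,
    Function.comp_assoc, Equiv.symm_comp_self, Function.comp_id]
  rfl

variable [Fintype ω]

/-- The `inl` neurons run `R`; the `inr` neurons evolve by `W` and read `R`'s output through `C`. -/
@[simps]
def cascade (R : RNN ι κ ω) (W : Matrix κ' κ' ℝ) (C : Matrix κ' ω ℝ) (b : κ' → ℝ)
    (Ao : Matrix ω' κ' ℝ) (bo : ω' → ℝ) : RNN ι (κ ⊕ κ') ω' where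
  Ah := fromBlocks R.Ah 0 (C * R.Ao) W
  Ax := fromRows R.Ax 0
  Ao := fromCols 0 Ao
  bh := Sum.elim R.bh (C *ᵥ R.bo + b)
  bo := bo

variable (R : RNN ι κ ω) (W : Matrix κ' κ' ℝ) (C : Matrix κ' ω ℝ) (b : κ' → ℝ)
  (Ao : Matrix ω' κ' ℝ) (bo : ω' → ℝ) (x : ι → ℝ)

theorem hid_cascade_inl (t : ℕ) : (R.cascade W C b Ao bo).hid x t ∘ Sum.inl = R.hid x t := by
  induction t with
  | zero => rfl
  | succ t ih =>
    ext i
    simp [hid, fromBlocks_mulVec, ih, relu]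

theorem hid_cascade_inr_zero :
    (R.cascade W C b Ao bo).hid x 0 ∘ Sum.inr = relu (C *ᵥ R.bo + b) := by
  ext i
  simp [hid, relu]

theorem hid_cascade_inr_succ (t : ℕ) :
    (R.cascade W C b Ao bo).hid x (t + 1) ∘ Sum.inr =
      relu (W *ᵥ ((R.cascade W C b Ao bo).hid x t ∘ Sum.inr) + C *ᵥ R.out x t + b) := by
  ext i
  simp only [hid, cascade_Ah, cascade_bh, fromBlocks_mulVec, hid_cascade_inl, relu,
    Function.comp_apply, Pi.add_apply, Sum.elim_inr, out, mulVec_add, ← mulVec_mulVec]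
  ring_nf

theorem out_cascade (t : ℕ) :
    (R.cascade W C b Ao bo).out x t = Ao *ᵥ ((R.cascade W C b Ao bo).hid x t ∘ Sum.inr) + bo := by
  ext
  simp [out]

end RNN

theorem clip_mem_Icc {A B : ℝ} (h : A ≤ B) (y : ℝ) : clip y A B ∈ Set.Icc A B := by
  unfold clip
  constructor <;> split_ifs <;> linarith

theorem max_zero_add_sub_max_zero_sub {B : ℝ} (hB : 0 ≤ B) (y : ℝ) :
    max 0 (y + B) - max 0 (y - B) = clip y (-B) B + B := by
  unfold clip
  split_ifs <;> simp only [max_def] <;> split_ifs <;> linarith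

theorem sampleHold_step {B y q v G : ℝ} (hB : 0 ≤ B) (hq : q = 0 ∨ q = 1) (hv : 0 ≤ v)
    (hG : 0 ≤ G) (hvG : v + G ≤ 2 * B) :
    max 0 (y + B * q) - max 0 (y - B * q) + max 0 (G + v - 2 * B * q) =
      if q = 1 then clip y (-B) B + B else v + G := by
  rcases hq with rfl | rfl
  · simpa [add_comm] using add_nonneg hv hG
  · simp [max_zero_add_sub_max_zero_sub hB, max_eq_left (by linarith : G + v - 2 * B ≤ 0)]

structure IsSampleHold (B : ℝ) (y q v₁ v₂ G : ℕ → ℝ) : Prop where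
  pulse_eq_zero_or_one : ∀ t, q t = 0 ∨ q t = 1
  v_zero : v₁ 0 = v₂ 0
  G_zero : G 0 = 0
  v₁_succ : ∀ t, v₁ (t + 1) = max 0 (y t + B * q t)
  v₂_succ : ∀ t, v₂ (t + 1) = max 0 (y t - B * q t)
  G_succ : ∀ t, G (t + 1) = max 0 (G t + (v₁ t - v₂ t) - 2 * B * q t)

namespace IsSampleHold

variable {B : ℝ} {y q v₁ v₂ G : ℕ → ℝ}

theorem bounds (h : IsSampleHold B y q v₁ v₂ G) (hB : 0 ≤ B) (t : ℕ) :
    0 ≤ v₁ t - v₂ t ∧ 0 ≤ G t ∧ v₁ t - v₂ t + G t ≤ 2 * B := by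
  induction t with
  | zero => simp [h.v_zero, h.G_zero]; linarith
  | succ t ih =>
    obtain ⟨hv, hG, hvG⟩ := ih
    refine ⟨?_, ?_, ?_⟩
    · have hq : 0 ≤ B * q t := by
        rcases h.pulse_eq_zero_or_one t with hq | hq <;> simp [hq, hB]
      rw [sub_nonneg, h.v₁_succ, h.v₂_succ]
      exact max_le_max le_rfl (by linarith)
    · rw [h.G_succ]; exact le_max_left _ _
    · rw [h.v₁_succ, h.v₂_succ, h.G_succ,
        sampleHold_step hB (h.pulse_eq_zero_or_one t) hv hG hvG]
      split_ifs
      · linarith [(clip_mem_Icc (by linarith : -B ≤ B) (y t)).2]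
      · exact hvG

theorem succ_eq_ite (h : IsSampleHold B y q v₁ v₂ G) (hB : 0 ≤ B) (t : ℕ) :
    v₁ (t + 1) - v₂ (t + 1) + G (t + 1) =
      if q t = 1 then clip (y t) (-B) B + B else v₁ t - v₂ t + G t := by
  obtain ⟨hv, hG, hvG⟩ := h.bounds hB t
  rw [h.v₁_succ, h.v₂_succ, h.G_succ, sampleHold_step hB (h.pulse_eq_zero_or_one t) hv hG hvG]

end IsSampleHold

@[ext]
structure TimerState where
  u : ℝ
  s : ℝ
  s₂ : ℝ
  z : ℝ

namespace TimerState

/-- `(1/2)^t` is the value of the clock neuron at time `t`. -/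
def next (t : ℕ) (p : TimerState) : TimerState where
  u := max 0 (2 * p.u - 6 * p.s + p.z)
  s := max 0 (2 * p.u - 1)
  s₂ := max 0 (2 * p.u - 2)
  z := max 0 (8 * (1 / 2) ^ t + 4 * p.s₂ - 8)

/-- `1` at `(s, s₂) = (1, 0)`, and `0` at `(0, 0)` and at `(3, 2)`. -/
def pulse (p : TimerState) : ℝ := p.s - 3 / 2 * p.s₂

/-- The state at the times `2^k - 1`, one step after `u` has reached `2`. -/
def rest : TimerState := ⟨0, 3, 2, 0⟩

theorem pulse_rest : rest.pulse = 0 := by norm_num [pulse, rest]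

theorem rest_next (t : ℕ) : rest.next t = ⟨0, 0, 0, 8 * (1 / 2) ^ t⟩ := by
  ext <;> norm_num [next, rest]

theorem next_of_le {u z : ℝ} (t : ℕ) (hu₀ : 0 ≤ u) (hu : u ≤ 1 / 2) (hz : 0 ≤ z) :
    (⟨u, 0, 0, z⟩ : TimerState).next t = ⟨2 * u + z, 0, 0, 0⟩ := by
  have : (1 / 2 : ℝ) ^ t ≤ 1 := pow_le_one₀ (by norm_num) (by norm_num)
  ext <;> simp only [next] <;>
    first | rw [max_eq_left (by linarith)] | rw [max_eq_right (by linarith)]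
  ring

theorem next_one (t : ℕ) : (⟨1, 0, 0, 0⟩ : TimerState).next t = ⟨2, 1, 0, 0⟩ := by
  have : (1 / 2 : ℝ) ^ t ≤ 1 := pow_le_one₀ (by norm_num) (by norm_num)
  ext <;> norm_num [next]
  linarith

theorem next_two (t : ℕ) : (⟨2, 1, 0, 0⟩ : TimerState).next t = rest := by
  have : (1 / 2 : ℝ) ^ t ≤ 1 := pow_le_one₀ (by norm_num) (by norm_num)
  ext <;> norm_num [next, rest]
  linarith

end TimerState

open TimerState

def timer : ℕ → TimerState
  | 0 => ⟨1 / 2, 0, 0, 0⟩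
  | t + 1 => (timer t).next t

theorem timer_succ_of_eq {t : ℕ} {p : TimerState} (h : timer t = p) :
    timer (t + 1) = p.next t := by
  rw [timer, h]

theorem two_pow_mul_half_pow_le {i M : ℕ} (h : i < M) : (2 : ℝ) ^ i * (1 / 2) ^ M ≤ 1 / 2 :=
  calc (2 : ℝ) ^ i * (1 / 2) ^ M ≤ 2 ^ i * (1 / 2) ^ (i + 1) :=
        mul_le_mul_of_nonneg_left (pow_le_pow_of_le_one (by norm_num) (by norm_num) h)
          (by positivity)
    _ = 1 / 2 := by rw [pow_succ, ← mul_assoc, ← mul_pow]; norm_num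

/-- One window of the timer, from time `N - 1` to `2N - 1` with `N = M + 4`. -/
theorem timer_window {M : ℕ} (h : timer (M + 3) = rest) :
    (∀ i ≤ M + 2, (timer (M + 3 + i)).pulse = 0) ∧ (timer (2 * M + 6)).pulse = 1 ∧
      timer (2 * M + 7) = rest := by
  have h₄ : timer (M + 4) = ⟨0, 0, 0, 8 * (1 / 2) ^ (M + 3)⟩ := by
    rw [timer_succ_of_eq h, rest_next]
  have hdouble : ∀ i ≤ M, timer (M + 5 + i) = ⟨2 ^ i * (1 / 2) ^ M, 0, 0, 0⟩ := by
    intro i hi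
    induction i with
    | zero =>
      rw [timer_succ_of_eq h₄, next_of_le _ le_rfl (by norm_num) (by positivity)]
      ext <;> norm_num
      ring
    | succ i ih =>
      rw [← add_assoc, timer_succ_of_eq (ih (by omega)),
        next_of_le _ (by positivity) (two_pow_mul_half_pow_le (by omega)) le_rfl, pow_succ]
      ext <;> simp only; ring
  have h₆ : timer (2 * M + 6) = ⟨2, 1, 0, 0⟩ := by
    have := hdouble M le_rfl
    rw [← mul_pow, show (2 : ℝ) * (1 / 2) = 1 by norm_num, one_pow] at this
    rw [show 2 * M + 6 = M + 5 + M + 1 by omega, timer_succ_of_eq this, next_one]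
  refine ⟨fun i hi => ?_, by norm_num [h₆, pulse], by rw [timer_succ_of_eq h₆, next_two]⟩
  rcases i with _ | _ | j
  · rw [add_zero, h, pulse_rest]
  · simp [h₄, pulse]
  · rw [show M + 3 + (j + 2) = M + 5 + j by omega, hdouble j (by omega)]
    simp [pulse]

def IsPulse (t : ℕ) : Prop := ∃ k, 2 ≤ k ∧ t + 2 = 2 ^ k

theorem four_le_two_pow {k : ℕ} (hk : 2 ≤ k) : 4 ≤ 2 ^ k :=
  (Nat.pow_le_pow_right (by norm_num) hk : 2 ^ 2 ≤ 2 ^ k)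

theorem isPulse_two_pow_sub_two {k : ℕ} (hk : 2 ≤ k) : IsPulse (2 ^ k - 2) :=
  ⟨k, hk, by have := four_le_two_pow hk; omega⟩

theorem not_isPulse_of_lt_of_lt {k t : ℕ} (h₁ : 2 ^ k < t + 2) (h₂ : t + 2 < 2 ^ (k + 1)) :
    ¬IsPulse t := by
  rintro ⟨j, -, hj⟩
  rw [hj, Nat.pow_lt_pow_iff_right (by norm_num)] at h₁ h₂
  omega

open scoped Classical in
theorem timer_rest_and_pulse {k : ℕ} (hk : 2 ≤ k) :
    timer (2 ^ k - 1) = rest ∧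
      ∀ t < 2 ^ k - 1, (timer t).pulse = if IsPulse t then 1 else 0 := by
  induction k, hk using Nat.le_induction with
  | base =>
    have h₁ : timer 1 = ⟨1, 0, 0, 0⟩ := by norm_num [timer, next_of_le]
    have h₂ : timer 2 = ⟨2, 1, 0, 0⟩ := by rw [timer_succ_of_eq h₁, next_one]
    refine ⟨(timer_succ_of_eq h₂).trans (next_two 2), fun t ht => ?_⟩
    have hsmall : ∀ t < 2, ¬IsPulse t := fun t ht ⟨k, hk, h⟩ => by
      have := four_le_two_pow hk
      omega
    interval_cases t
    · simp [timer, pulse, hsmall]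
    · simp [h₁, pulse, hsmall]
    · simpa [h₂, pulse] using (isPulse_two_pow_sub_two le_rfl : IsPulse 2)
  | succ k hk ih =>
    obtain ⟨hrest, hpulse⟩ := ih
    have h4 := four_le_two_pow hk
    have hpow : 2 ^ (k + 1) = 2 * 2 ^ k := by ring
    obtain ⟨hquiet, hfire, hrest'⟩ :=
      timer_window (M := 2 ^ k - 4) (by rwa [show 2 ^ k - 4 + 3 = 2 ^ k - 1 by omega])
    refine ⟨by rwa [show 2 ^ (k + 1) - 1 = 2 * (2 ^ k - 4) + 7 by omega], fun t ht => ?_⟩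
    rcases lt_or_ge t (2 ^ k - 1) with ht' | ht'
    · exact hpulse t ht'
    rcases lt_or_ge t (2 ^ (k + 1) - 2) with ht'' | ht''
    · have := hquiet (t - (2 ^ k - 1)) (by omega)
      rw [show 2 ^ k - 4 + 3 + (t - (2 ^ k - 1)) = t by omega] at this
      rw [this, if_neg (not_isPulse_of_lt_of_lt (k := k) (by omega) (by omega))]
    · obtain rfl : t = 2 ^ (k + 1) - 2 := by omega
      rw [if_pos (isPulse_two_pow_sub_two (by omega)),
        show 2 ^ (k + 1) - 2 = 2 * (2 ^ k - 4) + 6 by omega, hfire]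

open scoped Classical in
theorem timer_pulse (t : ℕ) : (timer t).pulse = if IsPulse t then 1 else 0 :=
  (timer_rest_and_pulse (k := t + 2) (by omega)).2 t (by
    have := Nat.lt_two_pow_self (n := t + 2)
    omega)

open scoped Classical in
theorem eq_on_pulse_window {H c : ℕ → ℝ} (hH : ∀ t, H (t + 1) = if IsPulse t then c t else H t)
    {k l : ℕ} (hk : 2 ≤ k) (hl : l ≤ 2 ^ k - 1) : H (2 ^ k - 1 + l) = c (2 ^ k - 2) := by
  have h4 := four_le_two_pow hk
  induction l with
  | zero =>
    rw [add_zero, show 2 ^ k - 1 = 2 ^ k - 2 + 1 by omega, hH,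
      if_pos (isPulse_two_pow_sub_two hk)]
  | succ l ih =>
    rw [← add_assoc, hH,
      if_neg (not_isPulse_of_lt_of_lt (k := k) (by omega) (by rw [pow_succ]; omega)), ih (by omega)]

/- Neurons of the added block: `0` the constant `1` (it cancels the biases after time `0`),
`1` the clock `(1/2)^t`, `2`–`5` the timer `u, s, s₂, z`, `6`, `7` the samplers `v₁, v₂`, `8` the
register `G`; `9` and `10` stay at `0`. -/
def clipW (B : ℝ) : Matrix (Fin 11) (Fin 11) ℝ :=
  !![ 0,   0, 0,      0,        0, 0, 0,  0, 0, 0, 0;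
     -1, 1/2, 0,      0,        0, 0, 0,  0, 0, 0, 0;
   -1/2,   0, 2,     -6,        0, 1, 0,  0, 0, 0, 0;
      0,   0, 2,      0,        0, 0, 0,  0, 0, 0, 0;
      0,   0, 2,      0,        0, 0, 0,  0, 0, 0, 0;
      0,   8, 0,      0,        4, 0, 0,  0, 0, 0, 0;
      0,   0, 0,      B, -3/2 * B, 0, 0,  0, 0, 0, 0;
      0,   0, 0,     -B,  3/2 * B, 0, 0,  0, 0, 0, 0;
      0,   0, 0, -2 * B,    3 * B, 0, 1, -1, 1, 0, 0;
      0,   0, 0,      0,        0, 0, 0,  0, 0, 0, 0;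
      0,   0, 0,      0,        0, 0, 0,  0, 0, 0, 0]

def clipC : Matrix (Fin 11) (Fin 1) ℝ := !![0; 0; 0; 0; 0; 0; 1; 1; 0; 0; 0]

def clipBias : Fin 11 → ℝ := ![1, 1, 1/2, -1, -2, -8, 0, 0, 0, 0, 0]

def clipAo : Matrix (Fin 1) (Fin 11) ℝ := !![0, 0, 0, 0, 0, 0, 1, -1, 1, 0, 0]

section ClipNet

variable {ι κ : Type} [Fintype ι] [Fintype κ] (B : ℝ) (R : RNN ι κ (Fin 1)) (x : ι → ℝ)

def clipNet : RNN ι (κ ⊕ Fin 11) (Fin 1) := R.cascade (clipW B) clipC clipBias clipAo ![-B]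

def clipBlock (t : ℕ) : Fin 11 → ℝ := (clipNet B R).hid x t ∘ Sum.inr

theorem clipBlock_zero : clipBlock B R x 0 = relu (clipC *ᵥ R.bo + clipBias) :=
  RNN.hid_cascade_inr_zero ..

theorem clipBlock_succ (t : ℕ) : clipBlock B R x (t + 1) =
    relu (clipW B *ᵥ clipBlock B R x t + clipC *ᵥ R.out x t + clipBias) :=
  RNN.hid_cascade_inr_succ ..

theorem clipBlock_clock (t : ℕ) :
    clipBlock B R x t 0 = 1 ∧ clipBlock B R x t 1 = (1 / 2) ^ t := by
  induction t with
  | zero => norm_num [clipBlock_zero, relu, clipC, clipBias, dotProduct]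
  | succ t ih =>
    simp [clipBlock_succ, relu, clipW, clipC, clipBias, dotProduct, Fin.sum_univ_succ, ih,
      pow_succ, mul_comm]

theorem clipBlock_timer (t : ℕ) :
    (⟨clipBlock B R x t 2, clipBlock B R x t 3, clipBlock B R x t 4, clipBlock B R x t 5⟩ :
      TimerState) = timer t := by
  induction t with
  | zero => ext <;> simp [clipBlock_zero, relu, clipC, clipBias, dotProduct, timer]
  | succ t ih =>
    rw [timer, ← ih]
    ext <;> simp [clipBlock_succ, relu, clipW, clipC, clipBias, dotProduct, Fin.sum_univ_succ,
      (clipBlock_clock B R x t).1, (clipBlock_clock B R x t).2, TimerState.next] <;> ring_nf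

theorem clipBlock_isSampleHold :
    IsSampleHold B (fun t => R.out x t 0) (fun t => (timer t).pulse)
      (fun t => clipBlock B R x t 6) (fun t => clipBlock B R x t 7)
      (fun t => clipBlock B R x t 8) := by
  refine ⟨fun t => ?_, ?_, ?_, fun t => ?_, fun t => ?_, fun t => ?_⟩
  · rw [timer_pulse]; split_ifs <;> simp
  all_goals
    simp [clipBlock_zero, clipBlock_succ, relu, clipW, clipC, clipBias, dotProduct,
      Fin.sum_univ_succ, ← clipBlock_timer B R x, TimerState.pulse]
  all_goals ring_nf

theorem clipNet_out (t : ℕ) : (clipNet B R).out x t 0 =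
    clipBlock B R x t 6 - clipBlock B R x t 7 + clipBlock B R x t 8 - B := by
  simp [clipNet, RNN.out_cascade, clipAo, dotProduct, Fin.sum_univ_succ, clipBlock,
    sub_eq_add_neg, add_assoc]

end ClipNet

end

/-- Lemma (output holding / clipping): fix `B > 0` and let `R` be an RNN with output
dimension 1 and hidden state size `m`.  There is an RNN `R'` with the same input
dimension, output dimension 1, and hidden state size `m + 11` such that for all inputs
`x`, all integers `k ≥ 2`, and all `ℓ ∈ {0,…,2^k − 1}`:
`(R' 𝒟 x)[2^k − 1 + ℓ] = C((R 𝒟 x)[2^k − 2], −B, B)`. -/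
theorem stmt18 (B : ℝ) (hB : 0 < B) (din mh : ℕ)
    (R : RNN (Fin din) (Fin mh) (Fin 1)) :
    ∃ R' : RNN (Fin din) (Fin (mh + 11)) (Fin 1),
      ∀ x : Fin din → ℝ, ∀ k : ℕ, 2 ≤ k → ∀ l : ℕ, l ≤ 2 ^ k - 1 →
        R'.out x (2 ^ k - 1 + l) 0 = clip (R.out x (2 ^ k - 2) 0) (-B) B := by
  refine ⟨(clipNet B R).reindexHidden finSumFinEquiv, fun x k hk l hl => ?_⟩
  have hsample := (clipBlock_isSampleHold B R x).succ_eq_ite hB.le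
  have hhold := eq_on_pulse_window
    (H := fun t => clipBlock B R x t 6 - clipBlock B R x t 7 + clipBlock B R x t 8)
    (c := fun t => clip (R.out x t 0) (-B) B + B)
    (fun t => by simp only [hsample, timer_pulse]; split_ifs <;> simp_all) hk hl
  rw [RNN.out_reindexHidden, clipNet_out]
  linarith
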